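/- Let C be a small category and let WithTerminal C be the category obtained from C by freely adjoining a terminal object ⊤. Then the functor category (WithTerminal C) ⥤ Type is equivalent to the comma category (C ⥤ Type) ↓ Δ, where Δ : Type ⥤ (C ⥤ Type) is the constant-diagram functor: the equivalence sends a functor Q : WithTerminal C ⥤ Type to the triple consisting of the restriction P of Q to C, the set S = Q(⊤), and the natural transformation P ⟶ Δ(S) whose components are the maps Q(c) → Q(⊤) induced by the unique morphisms c → ⊤. -/

import Mathlib

open CategoryTheory

/-- For `Q : WithTerminal C ⥤ Type`, the natural transformation from the
restriction of `Q` to `C` to the constant presheaf at `Q(⊤)`, whose components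
are induced by the unique morphisms `c ⟶ ⊤`. -/
def toTerminalNatTrans (C : Type) [SmallCategory C] (Q : WithTerminal C ⥤ Type) :
    (WithTerminal.incl ⋙ Q) ⟶ (Functor.const C).obj (Q.obj WithTerminal.star) where
  app c := Q.map (WithTerminal.starTerminal.from (WithTerminal.incl.obj c))
  naturality c c' f := by
    dsimp
    rw [← Q.map_comp]
    congr 1

section Aux
variable (C : Type) [SmallCategory C]
open WithTerminal

/-- The forward functor of the equivalence. -/
def myF : (WithTerminal C ⥤ Type) ⥤
    Comma (𝟭 (C ⥤ Type)) (Functor.const C : Type ⥤ (C ⥤ Type)) where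
  obj Q := ⟨WithTerminal.incl ⋙ Q, Q.obj WithTerminal.star, toTerminalNatTrans C Q⟩
  map {Q Q'} η :=
    { left := Functor.whiskerLeft WithTerminal.incl η
      right := η.app WithTerminal.star
      w := by
        ext c x
        exact (FunctorToTypes.naturality (F := Q) (G := Q') (φ := η) (f := starTerminal.from (incl.obj c)) (x := x)).symm }

/-- The backward functor of the equivalence. -/
def myG : Comma (𝟭 (C ⥤ Type)) (Functor.const C : Type ⥤ (C ⥤ Type)) ⥤
    (WithTerminal C ⥤ Type) where
  obj X := WithTerminal.lift X.left (fun c => X.hom.app c)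
    (fun x y f => by simpa using X.hom.naturality f)
  map {X Y} u :=
    { app := fun a => match a with
        | .of c => u.left.app c
        | .star => u.right
      naturality := by
        rintro (a | _) (b | _) f
        · exact u.left.naturality (down f)
        · change PUnit at f; cases f
          exact (NatTrans.congr_app u.w a).symm
        · change PEmpty at f; cases f
        · change PUnit at f; cases f; rfl }

/-- The unit isomorphism. -/
def myUnit : 𝟭 (WithTerminal C ⥤ Type) ≅ myF C ⋙ myG C :=
  NatIso.ofComponents (fun Q => NatIso.ofComponents
    (fun a => match a with
      | .of _ => Iso.refl _
      | .star => Iso.refl _)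
    (by
      rintro (a | _) (b | _) f
      · rfl
      · change PUnit at f; cases f; rfl
      · change PEmpty at f; cases f
      · change PUnit at f; cases f
        show Q.map (𝟙 WithTerminal.star) ≫ 𝟙 _ = 𝟙 _ ≫ 𝟙 _
        rw [Q.map_id]))
    (by
      intro Q Q' η
      apply NatTrans.ext
      funext a
      cases a <;> simp [myF, myG] <;> rfl)

/-- The counit isomorphism. -/
def myCounit : myG C ⋙ myF C ≅ 𝟭 _ :=
  NatIso.ofComponents (fun X => Iso.refl _) (by
    intro X Y u
    simp only [Iso.refl_hom, Category.comp_id, Category.id_comp]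
    rfl)

end Aux

/-- The functor category `(WithTerminal C) ⥤ Type` is equivalent to the comma
category `(C ⥤ Type) ↓ Δ`, where `Δ : Type ⥤ (C ⥤ Type)` is the
constant-diagram functor; the equivalence sends `Q : WithTerminal C ⥤ Type` to
the triple consisting of the restriction of `Q` to `C`, the set `Q(⊤)`, and the
natural transformation with components `Q(c) → Q(⊤)` induced by the unique
morphisms `c ⟶ ⊤`. -/
theorem withTerminal_functor_equiv_comma_const
    (C : Type) [SmallCategory C] :
    ∃ e : (WithTerminal C ⥤ Type) ≌
        Comma (𝟭 (C ⥤ Type)) (Functor.const C : Type ⥤ (C ⥤ Type)),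
      ∀ Q : WithTerminal C ⥤ Type,
        e.functor.obj Q =
          ⟨WithTerminal.incl ⋙ Q, Q.obj WithTerminal.star, toTerminalNatTrans C Q⟩ :=
  ⟨CategoryTheory.Equivalence.mk (myF C) (myG C) (myUnit C) (myCounit C), fun _ => rfl⟩
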